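/- Under the assumptions T₀ < T_f < T_i and positive physical constants, the coefficient ξ > 0 of the Neumann solution satisfies erf(ξ√(α_ℓ/α_s)) < (k_s/k_ℓ)·√(α_ℓ/α_s)·(T_f − T₀)/(T_i − T_f). -/
import Mathlib


open Real Filter Topology Set

noncomputable def erf (x : ℝ) : ℝ := (2 / Real.sqrt Real.pi) * ∫ u in (0:ℝ)..x, Real.exp (-u^2)

noncomputable def erfc (x : ℝ) : ℝ := 1 - erf x

open MeasureTheory
lemma gauss_int : Integrable (fun u : ℝ => Real.exp (-u^2)) := by
  simpa using integrable_exp_neg_mul_sq (one_pos)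

lemma gauss_Ioi : (∫ u in Ioi (0:ℝ), Real.exp (-u^2)) = Real.sqrt Real.pi / 2 := by
  simpa using integral_gaussian_Ioi 1

lemma gauss_Ioi_pos (x : ℝ) : 0 < ∫ u in Ioi x, Real.exp (-u^2) := by
  rw [setIntegral_pos_iff_support_of_nonneg_ae
    (Eventually.of_forall fun u => (Real.exp_pos _).le) gauss_int.integrableOn]
  have : Function.support (fun u : ℝ => Real.exp (-u^2)) = univ := by
    ext u; simp [Function.mem_support, (Real.exp_pos _).ne']
  rw [this, univ_inter]
  simp [Real.volume_Ioi]

lemma gauss_split (x : ℝ) (hx : 0 ≤ x) :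
    (∫ u in Ioi (0:ℝ), Real.exp (-u^2))
      = (∫ u in (0:ℝ)..x, Real.exp (-u^2)) + ∫ u in Ioi x, Real.exp (-u^2) := by
  rw [intervalIntegral.integral_of_le hx, ← setIntegral_union
    (Ioc_disjoint_Ioi le_rfl) measurableSet_Ioi gauss_int.integrableOn gauss_int.integrableOn,
    Ioc_union_Ioi_eq_Ioi hx]

lemma sqrt_pi_pos : 0 < Real.sqrt Real.pi := Real.sqrt_pos.mpr Real.pi_pos

lemma erfc_eq (x : ℝ) (hx : 0 ≤ x) :
    erfc x = (2 / Real.sqrt Real.pi) * ∫ u in Ioi x, Real.exp (-u^2) := by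
  have h := gauss_split x hx
  rw [gauss_Ioi] at h
  have h2 : (∫ u in Ioi x, Real.exp (-u^2))
      = Real.sqrt Real.pi / 2 - ∫ u in (0:ℝ)..x, Real.exp (-u^2) := by linarith
  rw [erfc, erf, h2, mul_sub]
  have : (2 / Real.sqrt Real.pi) * (Real.sqrt Real.pi / 2) = 1 := by
    field_simp
  rw [this]

lemma erfc_pos (x : ℝ) (hx : 0 ≤ x) : 0 < erfc x := by
  rw [erfc_eq x hx]
  exact mul_pos (by positivity) (gauss_Ioi_pos x)

lemma erf_pos (x : ℝ) (hx : 0 < x) : 0 < erf x := by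
  refine mul_pos (by positivity) ?_
  exact intervalIntegral.intervalIntegral_pos_of_pos
    ((Continuous.intervalIntegrable (by continuity) 0 x)) (fun u => Real.exp_pos _) hx

lemma interval_gauss_le (c : ℝ) :
    (∫ t in (0:ℝ)..c, Real.exp (-t^2)) ≤ Real.sqrt Real.pi / 2 := by
  rcases le_or_gt c 0 with hc | hc
  · rw [intervalIntegral.integral_of_ge hc]
    have : (0:ℝ) ≤ ∫ t in Ioc c 0, Real.exp (-t^2) :=
      setIntegral_nonneg measurableSet_Ioc fun t _ => (Real.exp_pos _).le
    nlinarith [sqrt_pi_pos]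
  · rw [intervalIntegral.integral_of_le hc.le, ← gauss_Ioi]
    exact setIntegral_mono_set gauss_int.integrableOn
      (Eventually.of_forall fun t => (Real.exp_pos _).le)
      (HasSubset.Subset.eventuallyLE Ioc_subset_Ioi_self)

lemma gauss_Ioi_le (x : ℝ) (hx : 0 ≤ x) :
    (∫ u in Ioi x, Real.exp (-u^2)) ≤ Real.exp (-x^2) * (Real.sqrt Real.pi / 2) := by
  refine le_of_tendsto (intervalIntegral_tendsto_integral_Ioi x gauss_int.integrableOn
    tendsto_id) ?_
  filter_upwards [eventually_ge_atTop x] with b hb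
  have h1 : (∫ u in x..b, Real.exp (-u^2))
      = ∫ t in (0:ℝ)..(b-x), Real.exp (-(t+x)^2) := by
    rw [intervalIntegral.integral_comp_add_right (fun u => Real.exp (-u^2)) x]
    norm_num
  simp only [id_eq]
  rw [h1]
  have h2 : (∫ t in (0:ℝ)..(b-x), Real.exp (-(t+x)^2))
      ≤ ∫ t in (0:ℝ)..(b-x), Real.exp (-x^2) * Real.exp (-t^2) := by
    apply intervalIntegral.integral_mono_on (by linarith)
    · exact Continuous.intervalIntegrable (by continuity) _ _
    · exact Continuous.intervalIntegrable (by continuity) _ _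
    · intro t ht
      rw [← Real.exp_add, Real.exp_le_exp]
      nlinarith [ht.1]
  refine h2.trans ?_
  rw [intervalIntegral.integral_const_mul]
  exact mul_le_mul_of_nonneg_left (interval_gauss_le _) (Real.exp_pos _).le

lemma erfc_le (x : ℝ) (hx : 0 ≤ x) : erfc x ≤ Real.exp (-x^2) := by
  rw [erfc_eq x hx]
  calc (2 / Real.sqrt Real.pi) * ∫ u in Ioi x, Real.exp (-u^2)
      ≤ (2 / Real.sqrt Real.pi) * (Real.exp (-x^2) * (Real.sqrt Real.pi / 2)) :=
        mul_le_mul_of_nonneg_left (gauss_Ioi_le x hx) (by positivity)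
    _ = Real.exp (-x^2) := by field_simp

lemma erf_lt_one (x : ℝ) (hx : 0 ≤ x) : erf x < 1 := by
  have := erfc_pos x hx; rw [erfc] at this; linarith

theorem neumann_coefficient_inequality' (ks kl cs cl ρ L T0 Tf Ti ξ αs αl b3 b4 : ℝ)
    (hks : 0 < ks) (hkl : 0 < kl) (hcs : 0 < cs) (hcl : 0 < cl) (hρ : 0 < ρ) (hL : 0 < L)
    (h2 : T0 < Tf) (h3 : Tf < Ti)
    (hαs : αs = ks / (ρ * cs)) (hαl : αl = kl / (ρ * cl))
    (hb3 : b3 = cl * (Ti - Tf) / (L * Real.sqrt Real.pi))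
    (hb4 : b4 = ks * (Tf - T0) / (ρ * L * Real.sqrt (Real.pi * αs * αl)))
    (hξ : 0 < ξ)
    (hG : b4 * (Real.exp (-((αl / αs) * ξ^2)) / erf (ξ * Real.sqrt (αl / αs)))
      - b3 * (Real.exp (-ξ^2) / erfc ξ) = ξ) :
    erf (ξ * Real.sqrt (αl / αs)) <
      ks / kl * Real.sqrt (αl / αs) * ((Tf - T0) / (Ti - Tf)) := by
  have hπ : 0 < Real.sqrt Real.pi := Real.sqrt_pos.mpr Real.pi_pos
  have hαs' : 0 < αs := by rw [hαs]; positivity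
  have hαl' : 0 < αl := by rw [hαl]; positivity
  have hsq : 0 < Real.sqrt (αl / αs) := Real.sqrt_pos.mpr (div_pos hαl' hαs')
  have hy0 : 0 < ξ * Real.sqrt (αl / αs) := mul_pos hξ hsq
  set ey := erf (ξ * Real.sqrt (αl / αs)) with hey_def
  have hey : 0 < ey := erf_pos _ hy0
  have hec : 0 < erfc ξ := erfc_pos ξ hξ.le
  have hTi : (0:ℝ) < Ti - Tf := by linarith
  have hT0 : (0:ℝ) < Tf - T0 := by linarith
  have hb3p : 0 < b3 := by rw [hb3]; positivity
  have hb4p : 0 < b4 := by rw [hb4]; positivity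
  have hE1 : 1 ≤ Real.exp (-ξ^2) / erfc ξ := (one_le_div hec).mpr (erfc_le ξ hξ.le)
  have hexp_le : Real.exp (-((αl / αs) * ξ^2)) ≤ 1 := by
    rw [Real.exp_le_one_iff]
    have : 0 < (αl / αs) * ξ^2 := by positivity
    linarith
  have hexp_pos := Real.exp_pos (-((αl / αs) * ξ^2))
  have key : ey < b4 / b3 := by
    have h1 : b4 * (Real.exp (-((αl / αs) * ξ^2)) / ey)
        = ξ + b3 * (Real.exp (-ξ^2) / erfc ξ) := by linarith
    have h2 : b4 * Real.exp (-((αl / αs) * ξ^2))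
        = ey * (ξ + b3 * (Real.exp (-ξ^2) / erfc ξ)) := by
      rw [← h1]; field_simp
    rw [lt_div_iff₀ hb3p]
    nlinarith [mul_pos hey hξ, mul_le_mul_of_nonneg_left hE1 (mul_pos hey hb3p).le,
      mul_le_mul_of_nonneg_left hexp_le hb4p.le]
  have hrhs : ks / kl * Real.sqrt (αl / αs) * ((Tf - T0) / (Ti - Tf)) = b4 / b3 := by
    have hBA : Real.sqrt (αl / αs) = Real.sqrt αl / Real.sqrt αs :=
      Real.sqrt_div hαl'.le αs
    have hπsq : Real.sqrt (Real.pi * αs * αl)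
        = Real.sqrt Real.pi * Real.sqrt αs * Real.sqrt αl := by
      rw [Real.sqrt_mul (by positivity), Real.sqrt_mul Real.pi_pos.le]
    have hkl_eq : kl = ρ * cl * αl := by rw [hαl]; field_simp
    set A := Real.sqrt αs with hA
    set B := Real.sqrt αl with hB
    have hA0 : 0 < A := Real.sqrt_pos.mpr hαs'
    have hB0 : 0 < B := Real.sqrt_pos.mpr hαl'
    have hB2 : B^2 = αl := Real.sq_sqrt hαl'.le
    rw [hb3, hb4, hπsq, hBA, hkl_eq, ← hB2]
    field_simp
  rw [hrhs]; exact key
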